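/- For an integer m ≥ 3, let Ω denote the m × m real matrix with rows and columns indexed by 0, 1, …, m−1, whose entries are: Ω(0,1) = 2; Ω(i,j) = 1 whenever |i − j| = 1 and (i,j) ≠ (0,1); Ω(m−1,0) = 1; and all other entries equal 0. If m is even (so m ≥ 4), then for every t ∈ ℝ the (0,0) entry of the matrix exponential exp(tΩ) equals (1/m)·( e^{2t} + e^{−2t} + 2·Σ_{q=1}^{(m−2)/2} e^{2t·cos(2πq/m)} ). -/

import Mathlib

/-!
The cosine vectors `c_q k = cos (2π q k / m)` are eigenvectors of `Ω` with eigenvalues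
`2 cos (2π q / m)`: on samples of a function `f : ℤ → ℝ` with `f (-1) = f 1` and
`f m = f 0`, `Ω` acts as `f ↦ f (· - 1) + f (· + 1)`, the doubled entry `Ω 0 1` and the
corner entry `Ω (m-1) 0` being exactly the reflection and the wrap-around. Since
`∑_{q < m} c_q = m e₀` (a geometric sum of roots of unity) and `c_q 0 = 1`, we get
`m exp(tΩ)₀₀ = ∑_{q < m} exp (2t cos (2π q / m))`. For `m = 2k` the terms `q` and `m - q`
agree, and the unpaired terms `q = 0` and `q = k` give `e^{2t}` and `e^{-2t}`.
-/

open scoped BigOperators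

/-- The `m × m` comparison matrix `Ω`: `Ω 0 1 = 2`, `Ω i j = 1` when `|i − j| = 1`
and `(i,j) ≠ (0,1)`, `Ω (m−1) 0 = 1`, all other entries `0`. -/
def OmegaMat (m : ℕ) : Matrix (Fin m) (Fin m) ℝ := fun i j =>
  if i.val = 0 ∧ j.val = 1 then 2
  else if i.val + 1 = j.val ∨ j.val + 1 = i.val then 1
  else if i.val = m - 1 ∧ j.val = 0 then 1
  else 0

open Finset Matrix Real

section

attribute [local instance] Matrix.linftyOpNormedRing Matrix.linftyOpNormedAlgebra

theorem Matrix.exp_mulVec_of_mulVec_eq_smul {n 𝕂 : Type*} [RCLike 𝕂] [Fintype n]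
    [DecidableEq n] {A : Matrix n n 𝕂} {v : n → 𝕂} {μ : 𝕂} (h : A *ᵥ v = μ • v) :
    NormedSpace.exp A *ᵥ v = NormedSpace.exp μ • v := by
  have hpow (k : ℕ) : A ^ k *ᵥ v = μ ^ k • v := by
    induction k with
    | zero => simp
    | succ k ih => rw [pow_succ, ← mulVec_mulVec, h, mulVec_smul, ih, smul_smul, pow_succ']
  have hA := (NormedSpace.exp_series_hasSum_exp' (𝕂 := 𝕂) A).map (mulVec.addMonoidHomLeft v)
    (continuous_id.matrix_mulVec continuous_const)
  have hμ := (NormedSpace.exp_series_hasSum_exp' (𝕂 := 𝕂) μ).smul_const v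
  refine hA.unique ?_
  simpa [Function.comp_def, mulVec.addMonoidHomLeft, smul_mulVec, hpow, smul_smul] using hμ

end

theorem Fin.sum_ite_val_eq {M : Type*} [AddCommMonoid M] {m a : ℕ} (ha : a < m) (f : ℕ → M) :
    ∑ j : Fin m, (if (j : ℕ) = a then f j else 0) = f a := by
  rw [Fin.sum_univ_eq_sum_range (fun j => if j = a then f j else 0), sum_ite_eq',
    if_pos (mem_range.mpr ha)]

theorem sum_range_cos_two_pi_mul_div {m k : ℕ} (hk : k < m) :
    ∑ q ∈ range m, cos (2 * π * q / m * k) = if k = 0 then (m : ℝ) else 0 := by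
  split_ifs with hk0
  · simp [hk0]
  have hm : m ≠ 0 := by omega
  set ζ : ℂ := Complex.exp (2 * π * Complex.I / m)
  have hζ : IsPrimitiveRoot ζ m := Complex.isPrimitiveRoot_exp m hm
  have hterm (q : ℕ) : cos (2 * π * q / m * k) = ((ζ ^ k) ^ q).re := by
    rw [← pow_mul, ← Complex.exp_nat_mul, ← Complex.exp_ofReal_mul_I_re]
    congr 2
    push_cast
    ring
  have hζk : (ζ ^ k) ^ m = 1 := by rw [← pow_mul, mul_comm, pow_mul, hζ.pow_eq_one, one_pow]
  simp_rw [hterm, ← Complex.re_sum, geom_sum_eq (hζ.pow_ne_one_of_pos_of_lt hk0 hk), hζk]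
  simp

theorem Finset.sum_range_two_mul_of_symm {M : Type*} [AddCommMonoid M] {k : ℕ} (hk : 0 < k)
    {f : ℕ → M} (hf : ∀ q ≤ k, f (2 * k - q) = f q) :
    ∑ q ∈ range (2 * k), f q = f 0 + f k + 2 • ∑ q ∈ Icc 1 (k - 1), f q := by
  obtain ⟨j, rfl⟩ : ∃ j, k = j + 1 := ⟨k - 1, by omega⟩
  have hIcc : ∑ q ∈ Icc 1 j, f q = ∑ q ∈ range j, f (q + 1) := by
    rw [← Finset.Ico_add_one_right_eq_Icc, sum_Ico_eq_sum_range]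
    simp only [add_comm, add_tsub_cancel_right]
  have hupper : ∑ q ∈ range (j + 1), f (j + 1 + q) = ∑ q ∈ range (j + 1), f (q + 1) := by
    rw [← sum_range_reflect]
    refine sum_congr rfl fun q hq => ?_
    rw [mem_range] at hq
    rw [← hf (q + 1) (by omega)]
    congr 1
    omega
  rw [two_mul, sum_range_add, hupper, sum_range_succ' f, sum_range_succ (fun q => f (q + 1)),
    add_tsub_cancel_right, hIcc, two_nsmul]
  abel

/-- Row `i` of `Ω` is the sum of the indicators of the reflected neighbours `|i - 1|` and
`(i + 1) mod m`; in row `0` they coincide, which accounts for the entry `2`. -/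
theorem omegaMat_apply {m : ℕ} (hm : 3 ≤ m) (i j : Fin m) :
    OmegaMat m i j =
      (if (j : ℕ) = (if (i : ℕ) = 0 then 1 else (i : ℕ) - 1) then 1 else 0) +
      (if (j : ℕ) = (if (i : ℕ) = m - 1 then 0 else (i : ℕ) + 1) then 1 else 0) := by
  unfold OmegaMat
  split_ifs <;> first | omega | norm_num

theorem omegaMat_mulVec_apply {m : ℕ} (hm : 3 ≤ m) (f : ℤ → ℝ) (hf_neg : f (-1) = f 1)
    (hf_period : f m = f 0) (i : Fin m) :
    (OmegaMat m *ᵥ fun j => f (j : ℕ)) i = f ((i : ℕ) - 1) + f ((i : ℕ) + 1) := by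
  have hi := i.isLt
  simp only [mulVec, dotProduct, omegaMat_apply hm, add_mul, ite_mul, one_mul, zero_mul,
    sum_add_distrib]
  rw [Fin.sum_ite_val_eq (f := fun n : ℕ => f n) (by split_ifs <;> omega),
    Fin.sum_ite_val_eq (f := fun n : ℕ => f n) (by split_ifs <;> omega)]
  by_cases h0 : (i : ℕ) = 0
  · have hl : (i : ℕ) ≠ m - 1 := by omega
    rw [if_pos h0, if_neg hl, h0]
    simp [hf_neg]
  have hi1 : 1 ≤ (i : ℕ) := by omega
  rw [if_neg h0]
  by_cases hl : (i : ℕ) = m - 1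
  · have hm1 : ((m - 1 : ℕ) : ℤ) + 1 = m := by omega
    rw [if_pos hl, hl, hm1, hf_period]
    congr 2
    omega
  · rw [if_neg hl]
    push_cast [hi1]
    rfl

theorem omegaMat_mulVec_cos {m : ℕ} (hm : 3 ≤ m) {θ : ℝ} (hθ : cos (θ * m) = 1) :
    OmegaMat m *ᵥ (fun k : Fin m => cos (θ * (k : ℕ))) =
      (2 * cos θ) • fun k : Fin m => cos (θ * (k : ℕ)) := by
  ext i
  have := omegaMat_mulVec_apply hm (fun z : ℤ => cos (θ * z)) (by simp) (by simpa using hθ) i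
  push_cast at this
  rw [this, Pi.smul_apply, smul_eq_mul, mul_sub, mul_add, mul_one, cos_sub, cos_add]
  ring

theorem natCast_mul_exp_smul_omegaMat_zero_zero {m : ℕ} (hm : 3 ≤ m) (t : ℝ) :
    (m : ℝ) * NormedSpace.exp (t • OmegaMat m)
        ⟨0, Nat.zero_lt_of_lt hm⟩ ⟨0, Nat.zero_lt_of_lt hm⟩ =
      ∑ q ∈ range m, Real.exp (2 * t * cos (2 * π * q / m)) := by
  set c : ℕ → Fin m → ℝ := fun q k => cos (2 * π * q / m * (k : ℕ))
  have heig (q : ℕ) : NormedSpace.exp (t • OmegaMat m) *ᵥ c q =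
      Real.exp (2 * t * cos (2 * π * q / m)) • c q := by
    rw [Real.exp_eq_exp_ℝ]
    apply Matrix.exp_mulVec_of_mulVec_eq_smul
    have hθ : cos (2 * π * q / m * m) = 1 := by
      rw [div_mul_cancel₀ _ (by positivity), mul_comm]
      exact cos_nat_mul_two_pi q
    rw [smul_mulVec, omegaMat_mulVec_cos hm hθ, smul_smul]
    congr 1
    ring
  have hsum : ∑ q ∈ range m, c q = (m : ℝ) • Pi.single ⟨0, by omega⟩ 1 := by
    ext k
    simp [c, Finset.sum_apply, sum_range_cos_two_pi_mul_div k.isLt, Pi.single_apply, Fin.ext_iff]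
  have := congrFun (congrArg (NormedSpace.exp (t • OmegaMat m) *ᵥ ·) hsum) ⟨0, by omega⟩
  simp only [mulVec_sum, heig, mulVec_smul, mulVec_single_one] at this
  simpa [c] using this.symm

/-- For even `m` (with `m ≥ 3`, so `m ≥ 4`), the `(0,0)` entry of
`exp(tΩ)` equals `(1/m)·(e^{2t} + e^{−2t} + 2·Σ_{q=1}^{(m−2)/2} e^{2t·cos(2πq/m)})`. -/
theorem stmt8 (m : ℕ) (hm : 3 ≤ m) (heven : Even m) (t : ℝ) :
    (NormedSpace.exp (t • OmegaMat m)) ⟨0, by omega⟩ ⟨0, by omega⟩ =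
      (1 / (m : ℝ)) * (Real.exp (2 * t) + Real.exp (-2 * t) +
        2 * ∑ q ∈ Finset.Icc 1 ((m - 2) / 2),
          Real.exp (2 * t * Real.cos (2 * Real.pi * q / m))) := by
  obtain ⟨k, rfl⟩ := heven
  have hk : (k : ℝ) ≠ 0 := by norm_cast; omega
  set g : ℕ → ℝ := fun q => Real.exp (2 * t * cos (2 * π * q / (k + k : ℕ)))
  have hsymm : ∀ q ≤ k, g (2 * k - q) = g q := by
    intro q hq
    simp only [g]
    rw [Nat.cast_sub (by omega), ← cos_two_pi_sub]
    congr 3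
    push_cast
    field_simp
    ring
  have hg0 : g 0 = Real.exp (2 * t) := by simp [g]
  have hgk : g k = Real.exp (-2 * t) := by
    have : 2 * π * k / (k + k : ℕ) = π := by
      push_cast
      field_simp
      ring
    simp only [g, this, cos_pi]
    ring_nf
  have hfold : ∑ q ∈ range (k + k), g q = g 0 + g k + 2 • ∑ q ∈ Icc 1 (k - 1), g q :=
    two_mul k ▸ sum_range_two_mul_of_symm (by omega) hsymm
  have hhalf : (k + k - 2) / 2 = k - 1 := by omega
  rw [one_div_mul_eq_div, eq_div_iff (by positivity), mul_comm,
    natCast_mul_exp_smul_omegaMat_zero_zero hm, hfold, hg0, hgk, hhalf, nsmul_eq_mul,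
    Nat.cast_ofNat]
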